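/- Expansion and contraction are inverse operations: if x^A is expandable in a saturated strongly stable ideal I, then x^A is contractible in the expansion I^exp and the contraction of x^A in I^exp equals I; symmetrically, if x^A is contractible in I, then x^A is expandable in I^con and the expansion of x^A in I^con equals I. -/

import Mathlib

open MvPolynomial
open Fin.NatCast

noncomputable section

/-- The polynomial ring `K[x_0,…,x_n]` in `n+1` variables. -/
abbrev PR (K : Type*) [Field K] (n : ℕ) := MvPolynomial (Fin (n+1)) K

variable {K : Type*} [Field K] {n : ℕ}

/-- The monomial `x^A`. -/
def mon (A : Fin (n+1) →₀ ℕ) : PR K n := monomial A 1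

/-- Total degree of the monomial with exponent vector `A`. -/
def mdeg (A : Fin (n+1) →₀ ℕ) : ℕ := ∑ i, A i

/-- The largest index of a variable dividing `x^A` (0 if `A = 0`). -/
def maxIdx (A : Fin (n+1) →₀ ℕ) : Fin (n+1) := (A.support.max).unbotD 0

/-- The exponent vector of `(x_i / x_j) · x^A`. -/
def shiftM (A : Fin (n+1) →₀ ℕ) (i j : Fin (n+1)) : Fin (n+1) →₀ ℕ :=
  A + Finsupp.single i 1 - Finsupp.single j 1

/-- `I` is a monomial ideal: generated by a set of monomials. -/
def IsMonomialIdeal (I : Ideal (PR K n)) : Prop :=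
  ∃ S : Set (Fin (n+1) →₀ ℕ), I = Ideal.span ((fun A => (mon A : PR K n)) '' S)

/-- Strongly stable monomial ideal. -/
def StronglyStable (I : Ideal (PR K n)) : Prop :=
  ∀ A : Fin (n+1) →₀ ℕ, mon A ∈ I → ∀ i j : Fin (n+1), A j ≠ 0 → i < j →
    mon (shiftM A i j) ∈ I

/-- Stable monomial ideal. -/
def Stable (I : Ideal (PR K n)) : Prop :=
  ∀ A : Fin (n+1) →₀ ℕ, A ≠ 0 → mon A ∈ I → ∀ i : Fin (n+1), i < maxIdx A →
    mon (shiftM A i (maxIdx A)) ∈ I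

/-- `x^A` is a minimal monomial generator of `I`. -/
def MinGen (I : Ideal (PR K n)) (A : Fin (n+1) →₀ ℕ) : Prop :=
  mon A ∈ I ∧ ∀ B : Fin (n+1) →₀ ℕ, B ≤ A → B ≠ A → mon B ∉ I

/-- The set of exponent vectors of minimal monomial generators of `I`. -/
def Gens (I : Ideal (PR K n)) : Set (Fin (n+1) →₀ ℕ) := {A | MinGen I A}

/-- The irrelevant maximal ideal `(x_0,…,x_n)`. -/
def irrIdeal (K : Type*) [Field K] (n : ℕ) : Ideal (PR K n) :=
  Ideal.span (Set.range fun i : Fin (n+1) => (X i : PR K n))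

/-- `I` is saturated: `(I : (x_0,…,x_n)) = I`. -/
def Saturated (I : Ideal (PR K n)) : Prop :=
  Submodule.colon I (irrIdeal K n) = I

/-- The saturation `∪ₖ (I : (x_0,…,x_n)^k)`. -/
def saturationOf (I : Ideal (PR K n)) : Ideal (PR K n) :=
  ⨆ k : ℕ, Submodule.colon I (((irrIdeal K n) ^ k : Ideal (PR K n)) : Set (PR K n))

/-- The Hilbert function of `R/I`: `j ↦ dim_K [R/I]_j`. -/
def hilbF {σ : Type*} (I : Ideal (MvPolynomial σ K)) (j : ℕ) : ℕ :=
  Module.finrank K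
    ((homogeneousSubmodule σ K j).map (Ideal.Quotient.mkₐ K I).toLinearMap)

/-- `p` is the Hilbert polynomial of `R/I`. -/
def IsHilbPoly {σ : Type*} (I : Ideal (MvPolynomial σ K)) (p : Polynomial ℚ) : Prop :=
  ∃ N : ℕ, ∀ j : ℕ, N ≤ j → p.eval (j : ℚ) = (hilbF I j : ℚ)

/-- The binomial-coefficient polynomial `C(q, k) = q(q-1)⋯(q-k+1)/k!`. -/
def choosePoly (q : Polynomial ℚ) (k : ℕ) : Polynomial ℚ :=
  ((k.factorial : ℚ))⁻¹ • ∏ j ∈ Finset.range k, (q - Polynomial.C (j : ℚ))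

/-- The canonical representation `p(z) = Σ_{i=0}^d [C(z+i,i+1) − C(z+i−b_i,i+1)]`. -/
def canonicalHP (d : ℕ) (b : ℕ → ℕ) : Polynomial ℚ :=
  ∑ i ∈ Finset.range (d+1),
    (choosePoly (Polynomial.X + Polynomial.C (i : ℚ)) (i+1)
      - choosePoly (Polynomial.X + Polynomial.C (i : ℚ) - Polynomial.C (b i : ℚ)) (i+1))

/-- `x^A >_lex x^B`. -/
def LexGt (A B : Fin (n+1) →₀ ℕ) : Prop :=
  ∃ i : Fin (n+1), (∀ j : Fin (n+1), j < i → A j = B j) ∧ B i < A i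

/-- `I` is a lexsegment ideal. -/
def IsLexsegment (I : Ideal (PR K n)) : Prop :=
  IsMonomialIdeal I ∧ ∀ A B : Fin (n+1) →₀ ℕ, mdeg A = mdeg B → mon B ∈ I →
    LexGt A B → mon A ∈ I

/-- `I` is a homogeneous ideal. -/
def Homog (I : Ideal (PR K n)) : Prop :=
  ∀ f ∈ I, ∀ j : ℕ, homogeneousComponent j f ∈ I

/-- The set of right-shifts of `x^A`. -/
def rightShifts (A : Fin (n+1) →₀ ℕ) : Set (Fin (n+1) →₀ ℕ) :=
  {B | ∃ i : Fin (n+1), (i : ℕ) + 2 ≤ n ∧ A i ≠ 0 ∧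
    B = shiftM A ((((i : ℕ) + 1 : ℕ)) : Fin (n+1)) i}

/-- The set of left-shifts of `x^A`. -/
def leftShifts (A : Fin (n+1) →₀ ℕ) : Set (Fin (n+1) →₀ ℕ) :=
  {B | ∃ i : Fin (n+1), 1 ≤ (i : ℕ) ∧ (i : ℕ) + 1 ≤ n ∧ A i ≠ 0 ∧
    B = shiftM A ((((i : ℕ) - 1 : ℕ)) : Fin (n+1)) i}

/-- The monomials `x^A x_r, …, x^A x_{n-1}` with `r = max(x^A)`. -/
def expSet (A : Fin (n+1) →₀ ℕ) : Set (Fin (n+1) →₀ ℕ) :=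
  {B | ∃ j : Fin (n+1), ((maxIdx A : ℕ)) ≤ (j : ℕ) ∧ (j : ℕ) + 1 ≤ n ∧
    B = A + Finsupp.single j 1}

/-- `x^A ≠ 1` is expandable in `I`. -/
def Expandable (I : Ideal (PR K n)) (A : Fin (n+1) →₀ ℕ) : Prop :=
  A ≠ 0 ∧ MinGen I A ∧ ∀ B ∈ rightShifts A, ¬ MinGen I B

/-- `x^A ≠ 1` is contractible in `I`. -/
def Contractible (I : Ideal (PR K n)) (A : Fin (n+1) →₀ ℕ) : Prop :=
  A ≠ 0 ∧ mon A ∉ I ∧ MinGen I (A + Finsupp.single (((n - 1 : ℕ)) : Fin (n+1)) 1) ∧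
    ∀ B ∈ leftShifts A, mon B ∈ I

/-- The expansion of `x^A` in `I`. -/
def expansionIdeal (I : Ideal (PR K n)) (A : Fin (n+1) →₀ ℕ) : Ideal (PR K n) :=
  Ideal.span ((fun B => (mon B : PR K n)) '' ((Gens I \ {A}) ∪ expSet A))

/-- The contraction of `x^A` in `I`. -/
def contractionIdeal (I : Ideal (PR K n)) (A : Fin (n+1) →₀ ℕ) : Ideal (PR K n) :=
  Ideal.span ((fun B => (mon B : PR K n)) '' ((Gens I ∪ {A}) \ expSet A))

/-- Setting `x_{n-1} = x_n = 1` in the exponent vector `A`. -/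
def stripLastTwo (A : Fin (n+1) →₀ ℕ) : Fin (n+1) →₀ ℕ :=
  Finsupp.update (Finsupp.update A (((n : ℕ)) : Fin (n+1)) 0) (((n - 1 : ℕ)) : Fin (n+1)) 0

/-- The double saturation `sat_{x_{n-1},x_n}(I)` (as an ideal of `R`). -/
def doubleSat (I : Ideal (PR K n)) : Ideal (PR K n) :=
  Ideal.span ((fun A => (mon (stripLastTwo A) : PR K n)) '' Gens I)

/-- Restriction of an exponent vector to the first `n` variables. -/
def restrictExp (A : Fin (n+1) →₀ ℕ) : Fin n →₀ ℕ :=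
  Finsupp.comapDomain Fin.castSucc A (Fin.castSucc_injective n).injOn

/-- The ideal `I · R^{(1)}` in `K[x_0,…,x_{n-1}]` (for saturated monomial `I`). -/
def restrictIdeal (I : Ideal (PR K n)) : Ideal (MvPolynomial (Fin n) K) :=
  Ideal.span ((fun A => (monomial (restrictExp A) (1 : K) : MvPolynomial (Fin n) K)) '' Gens I)

/-- Lex order on exponent vectors in `n` variables. -/
def LexGt' (A B : Fin n →₀ ℕ) : Prop :=
  ∃ i : Fin n, (∀ j : Fin n, j < i → A j = B j) ∧ B i < A i

/-- Monomial ideal in `K[x_0,…,x_{n-1}]`. -/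
def IsMonomialIdeal' (I : Ideal (MvPolynomial (Fin n) K)) : Prop :=
  ∃ S : Set (Fin n →₀ ℕ),
    I = Ideal.span ((fun A => (monomial A (1 : K) : MvPolynomial (Fin n) K)) '' S)

/-- Lexsegment ideal in `K[x_0,…,x_{n-1}]`. -/
def IsLexsegment' (I : Ideal (MvPolynomial (Fin n) K)) : Prop :=
  IsMonomialIdeal' I ∧ ∀ A B : Fin n →₀ ℕ, (∑ i, A i) = (∑ i, B i) →
    monomial B (1 : K) ∈ I → LexGt' A B → monomial A (1 : K) ∈ I

/-- `I` is almost lexsegment: saturated strongly stable with `I·R^{(1)}` lexsegment. -/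
def AlmostLex (I : Ideal (PR K n)) : Prop :=
  IsMonomialIdeal I ∧ StronglyStable I ∧ Saturated I ∧ IsLexsegment' (restrictIdeal I)

/-- A graded free resolution of the ideal `I`, with `rank i` the rank of the `i`-th
free module and `twist i k` the degrees of the standard basis elements. -/
structure GradedFreeRes (I : Ideal (PR K n)) where
  rank : ℕ → ℕ
  twist : (i : ℕ) → Fin (rank i) → ℕ
  diff : (i : ℕ) → ((Fin (rank (i+1)) → PR K n) →ₗ[PR K n] (Fin (rank i) → PR K n))
  aug : (Fin (rank 0) → PR K n) →ₗ[PR K n] PR K n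
  aug_range : LinearMap.range aug = I
  aug_graded : ∀ k, aug (Pi.single k 1) ∈ homogeneousSubmodule (Fin (n+1)) K (twist 0 k)
  diff_graded : ∀ i k l, diff i (Pi.single k 1) l = 0 ∨
    (twist i l ≤ twist (i+1) k ∧
      diff i (Pi.single k 1) l ∈ homogeneousSubmodule (Fin (n+1)) K (twist (i+1) k - twist i l))
  exact_aug : LinearMap.range (diff 0) = LinearMap.ker aug
  exact_diff : ∀ i, LinearMap.range (diff (i+1)) = LinearMap.ker (diff i)

/-- A resolution is minimal if all differential entries lie in the irrelevant ideal. -/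
def MinimalRes {I : Ideal (PR K n)} (F : GradedFreeRes I) : Prop :=
  ∀ i k l, constantCoeff (F.diff i (Pi.single k 1) l) = 0

end

/-!
A set of monomials that is an antichain for divisibility is the minimal generating set of the
ideal it spans, and a monomial ideal is spanned by its minimal generators. So both identities
reduce to set bookkeeping once the two candidate generating sets
`G(I) \ {x^A} ∪ {x^A x_r, …, x^A x_{n-1}}` and `G(I) ∪ {x^A} \ {x^A x_r, …, x^A x_{n-1}}`
are shown to be antichains. Both antichain arguments are Borel moves `x_j ↦ x_i` (`i < j`)
inside `I`, together with the fact that, `I` being saturated and strongly stable, no minimal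
generator involves `x_n`.
-/

section ExponentVectors

variable {σ : Type*}

lemma exists_eq_add_single {A : σ →₀ ℕ} {i : σ} (h : A i ≠ 0) :
    ∃ D, A = D + Finsupp.single i 1 :=
  ⟨A - Finsupp.single i 1,
    (tsub_add_cancel_of_le (Finsupp.single_le_iff.2 (Nat.one_le_iff_ne_zero.2 h))).symm⟩

lemma le_or_exists_eq_add_single_of_le_add_single {B D : σ →₀ ℕ} {k : σ}
    (h : B ≤ D + Finsupp.single k 1) : B ≤ D ∨ ∃ F ≤ D, B = F + Finsupp.single k 1 := by
  classical
  by_cases hBk : B k = 0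
  · refine Or.inl fun i => ?_
    by_cases hik : i = k
    · subst hik; omega
    · simpa [Finsupp.single_apply, Ne.symm hik] using h i
  · obtain ⟨F, rfl⟩ := exists_eq_add_single hBk
    exact Or.inr ⟨F, (add_le_add_iff_right _).1 h, rfl⟩

lemma exists_add_single_le_of_lt {B A : σ →₀ ℕ} (h : B < A) :
    ∃ i, B + Finsupp.single i 1 ≤ A := by
  classical
  obtain ⟨i, hi⟩ : ∃ i, B i < A i := by
    by_contra! hc
    exact h.not_ge hc
  refine ⟨i, fun k => ?_⟩
  by_cases hik : i = k
  · subst hik; simpa using hi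
  · simpa [Finsupp.single_apply, hik] using h.le k

lemma lt_add_single (D : σ →₀ ℕ) (i : σ) : D < D + Finsupp.single i 1 :=
  lt_add_of_pos_right D (pos_iff_ne_zero.2 (Finsupp.single_ne_zero.2 one_ne_zero))

lemma add_single_le_add_single_iff {D : σ →₀ ℕ} {i j : σ} :
    D + Finsupp.single i 1 ≤ D + Finsupp.single j 1 ↔ i = j := by
  classical
  refine ⟨fun h => ?_, fun h => h ▸ le_rfl⟩
  by_contra hij
  simpa [Finsupp.single_apply, hij] using h i

lemma add_single_inj {D : σ →₀ ℕ} {i j : σ} :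
    D + Finsupp.single i 1 = D + Finsupp.single j 1 ↔ i = j := by
  rw [add_right_inj, Finsupp.single_left_inj one_ne_zero]

end ExponentVectors

lemma shiftM_add_single {n : ℕ} (D : Fin (n+1) →₀ ℕ) (i j : Fin (n+1)) :
    shiftM (D + Finsupp.single j 1) i j = D + Finsupp.single i 1 := by
  rw [shiftM, add_right_comm, add_tsub_cancel_right]

section MonomialIdeals

variable {K : Type*} [Field K] {n : ℕ} {I : Ideal (PR K n)}

lemma mon_mem_span_iff {S : Set (Fin (n+1) →₀ ℕ)} {B : Fin (n+1) →₀ ℕ} :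
    (mon B : PR K n) ∈ Ideal.span ((fun A => (mon A : PR K n)) '' S) ↔
      ∃ C ∈ S, C ≤ B := by
  simp [mon, mem_ideal_span_monomial_image]

lemma mon_mem_of_le {A B : Fin (n+1) →₀ ℕ} (hA : (mon A : PR K n) ∈ I) (h : A ≤ B) :
    (mon B : PR K n) ∈ I := by
  have : (mon B : PR K n) = mon A * mon (B - A) := by
    rw [mon, mon, mon, monomial_mul, one_mul, add_tsub_cancel_of_le h]
  exact this ▸ I.mul_mem_right _ hA

lemma MinGen.eq_of_le {A C : Fin (n+1) →₀ ℕ} (hA : MinGen I A) (hC : (mon C : PR K n) ∈ I)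
    (h : C ≤ A) : C = A := by
  by_contra hne
  exact hA.2 C h hne hC

lemma isAntichain_gens : IsAntichain (· ≤ ·) (Gens I) :=
  fun _ hC _ hC' hne hle => hne (MinGen.eq_of_le hC' hC.1 hle)

lemma gens_span_of_isAntichain {S : Set (Fin (n+1) →₀ ℕ)} (hS : IsAntichain (· ≤ ·) S) :
    Gens (Ideal.span ((fun A => (mon A : PR K n)) '' S)) = S := by
  ext B
  change MinGen _ B ↔ B ∈ S
  simp only [MinGen, mon_mem_span_iff]
  constructor
  · rintro ⟨⟨C, hC, hCB⟩, hmin⟩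
    by_cases hCB' : C = B
    · exact hCB' ▸ hC
    · exact absurd ⟨C, hC, le_rfl⟩ (hmin C hCB hCB')
  · intro hB
    refine ⟨⟨B, hB, le_rfl⟩, fun B' hB'B hne ⟨C, hC, hCB'⟩ => ?_⟩
    have hCB : C ≤ B := hCB'.trans hB'B
    exact hS hC hB (fun h => hne (le_antisymm hB'B (h ▸ hCB'))) hCB

lemma exists_minGen_le {B : Fin (n+1) →₀ ℕ} (hB : (mon B : PR K n) ∈ I) :
    ∃ G, MinGen I G ∧ G ≤ B := by
  obtain ⟨G, ⟨hGB, hG⟩, hmin⟩ :=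
    wellFounded_lt.has_min {C | C ≤ B ∧ (mon C : PR K n) ∈ I} ⟨B, le_rfl, hB⟩
  exact ⟨G, ⟨hG, fun C hCG hne hC => hmin C ⟨hCG.trans hGB, hC⟩ (lt_of_le_of_ne hCG hne)⟩,
    hGB⟩

lemma span_gens (hmono : IsMonomialIdeal I) :
    Ideal.span ((fun A => (mon A : PR K n)) '' Gens I) = I := by
  obtain ⟨S, rfl⟩ := hmono
  refine le_antisymm (Ideal.span_le.2 ?_) (Ideal.span_le.2 ?_)
  · rintro _ ⟨G, hG, rfl⟩
    exact hG.1
  · rintro _ ⟨C, hC, rfl⟩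
    obtain ⟨G, hG, hGC⟩ := exists_minGen_le (I := Ideal.span _)
      (Ideal.subset_span (Set.mem_image_of_mem (fun A => (mon A : PR K n)) hC))
    exact mon_mem_span_iff.2 ⟨G, hG, hGC⟩

end MonomialIdeals

section MaxIdx

variable {n : ℕ} {A : Fin (n+1) →₀ ℕ}

lemma le_maxIdx {i : Fin (n+1)} (h : A i ≠ 0) : i ≤ maxIdx A := by
  have hmax := Finset.le_max (Finsupp.mem_support_iff.2 h)
  unfold maxIdx
  cases hm : A.support.max with
  | bot => simp [hm] at hmax
  | coe m => rw [hm] at hmax; simpa using hmax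

lemma apply_maxIdx_ne_zero (h : A ≠ 0) : A (maxIdx A) ≠ 0 := by
  obtain ⟨m, hm⟩ := Finset.max_of_nonempty (Finsupp.support_nonempty_iff.2 h)
  have : maxIdx A = m := by unfold maxIdx; rw [hm]; rfl
  exact this ▸ Finsupp.mem_support_iff.1 (Finset.mem_of_max hm)

lemma maxIdx_lt_last (h : A ≠ 0) (hlast : A (Fin.last n) = 0) : maxIdx A < Fin.last n :=
  lt_of_le_of_ne (Fin.le_last _) fun he => apply_maxIdx_ne_zero h (he ▸ hlast)

end MaxIdx

section StronglyStable

variable {K : Type*} [Field K] {n : ℕ} {I : Ideal (PR K n)}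

lemma StronglyStable.add_single_mem (hss : StronglyStable I) {D : Fin (n+1) →₀ ℕ}
    {i j : Fin (n+1)} (h : (mon (D + Finsupp.single j 1) : PR K n) ∈ I) (hij : i ≤ j) :
    (mon (D + Finsupp.single i 1) : PR K n) ∈ I := by
  rcases hij.eq_or_lt with rfl | hlt
  · exact h
  · simpa [shiftM_add_single] using hss _ h i j (by simp) hlt

lemma StronglyStable.minGen_add_single (hss : StronglyStable I) {D : Fin (n+1) →₀ ℕ}
    {i k : Fin (n+1)} (hD : MinGen I (D + Finsupp.single i 1)) (hik : i < k)
    (hk : (mon (D + Finsupp.single k 1) : PR K n) ∈ I) :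
    MinGen I (D + Finsupp.single k 1) := by
  refine ⟨hk, fun B hle hne hB => ?_⟩
  rcases le_or_exists_eq_add_single_of_le_add_single hle with hBD | ⟨F, hFD, rfl⟩
  · have := hD.eq_of_le hB (hBD.trans (lt_add_single D i).le)
    exact (lt_add_single D i).not_ge (this ▸ hBD)
  · have hFi := hD.eq_of_le (hss.add_single_mem hB hik.le) (by gcongr)
    exact hne (by rw [add_left_inj] at hFi; rw [hFi])

lemma StronglyStable.le_or_exists_of_le_add_single (hss : StronglyStable I)
    {A C : Fin (n+1) →₀ ℕ} {j : Fin (n+1)} (hC : (mon C : PR K n) ∈ I)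
    (hle : C ≤ A + Finsupp.single j 1) (hne : C ≠ A + Finsupp.single j 1)
    (hj : maxIdx A ≤ j) :
    C ≤ A ∨ ∃ F i, i ≤ j ∧ C = F + Finsupp.single j 1 ∧ F + Finsupp.single i 1 ≤ A ∧
      (mon (F + Finsupp.single i 1) : PR K n) ∈ I := by
  rcases le_or_exists_eq_add_single_of_le_add_single hle with hCA | ⟨F, hFA, rfl⟩
  · exact Or.inl hCA
  obtain ⟨i, hi⟩ :=
    exists_add_single_le_of_lt (lt_of_le_of_ne hFA (by rintro rfl; exact hne rfl))
  have hAi : A i ≠ 0 := by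
    have := hi i
    simp only [Finsupp.coe_add, Pi.add_apply, Finsupp.single_eq_same] at this
    omega
  have hij : i ≤ j := (le_maxIdx hAi).trans hj
  exact Or.inr ⟨F, i, hij, rfl, hi, hss.add_single_mem hC hij⟩

end StronglyStable

section Saturated

variable {K : Type*} [Field K] {n : ℕ} {I : Ideal (PR K n)}

lemma mon_mul_X (D : Fin (n+1) →₀ ℕ) (i : Fin (n+1)) :
    (mon D : PR K n) * X i = mon (D + Finsupp.single i 1) := by
  rw [mon, mon, X, monomial_mul, one_mul]

lemma Saturated.mem_of_forall_mul_X_mem (hsat : Saturated I) {f : PR K n}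
    (h : ∀ i, f * X i ∈ I) : f ∈ I := by
  rw [← hsat, irrIdeal, Ideal.colon_span, Submodule.mem_colon]
  rintro _ ⟨i, rfl⟩
  simpa [smul_eq_mul] using h i

lemma MinGen.apply_last_eq_zero (hss : StronglyStable I) (hsat : Saturated I)
    {A : Fin (n+1) →₀ ℕ} (hA : MinGen I A) : A (Fin.last n) = 0 := by
  by_contra h
  obtain ⟨D, rfl⟩ := exists_eq_add_single h
  have hD : (mon D : PR K n) ∈ I := hsat.mem_of_forall_mul_X_mem fun i => by
    rw [mon_mul_X]
    exact hss.add_single_mem hA.1 (Fin.le_last i)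
  exact (lt_add_single D _).ne (hA.eq_of_le hD (lt_add_single D _).le)

end Saturated

section Expansion

variable {K : Type*} [Field K] {n : ℕ} {I : Ideal (PR K n)} {A : Fin (n+1) →₀ ℕ}

lemma Expandable.eq_add_single_of_minGen_le (hss : StronglyStable I) (hE : Expandable I A)
    {C : Fin (n+1) →₀ ℕ} (hC : MinGen I C) (hCA : C ≠ A) {j : Fin (n+1)}
    (hj : maxIdx A ≤ j) (hjn : (j : ℕ) + 1 ≤ n) (hle : C ≤ A + Finsupp.single j 1) :
    C = A + Finsupp.single j 1 := by
  by_contra hne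
  rcases hss.le_or_exists_of_le_add_single hC.1 hle hne hj with hCA' | ⟨F, i, hij, rfl, hFA, hF⟩
  · exact hCA (hE.2.1.eq_of_le hC.1 hCA')
  obtain rfl : F + Finsupp.single i 1 = A := hE.2.1.eq_of_le hF hFA
  have hij : (i : ℕ) < j := lt_of_le_of_ne hij fun h => hCA (by rw [Fin.ext h])
  set i₁ : Fin (n+1) := (((i : ℕ) + 1 : ℕ) : Fin (n+1))
  have hi₁ : (i₁ : ℕ) = i + 1 := Fin.val_cast_of_lt (by omega)
  -- `x^A x_j / x_i ∈ I` makes the adjacent right shift `x^A x_{i+1} / x_i` a minimal generator.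
  have hmin : MinGen I (F + Finsupp.single i₁ 1) :=
    hss.minGen_add_single hE.2.1 (Fin.lt_def.2 (by omega))
      (hss.add_single_mem hC.1 (Fin.le_def.2 (by omega)))
  exact hE.2.2 _ ⟨i, by omega, by simp, (shiftM_add_single F i₁ i).symm⟩ hmin

lemma Expandable.isAntichain_gens_sdiff_union_expSet (hss : StronglyStable I)
    (hE : Expandable I A) :
    IsAntichain (· ≤ ·) ((Gens I \ {A}) ∪ expSet A) := by
  refine isAntichain_union.2 ⟨isAntichain_gens.subset Set.sdiff_subset, ?_, ?_⟩
  · rintro _ ⟨j, -, -, rfl⟩ _ ⟨j', -, -, rfl⟩ hne hle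
    exact hne (by rw [add_single_le_add_single_iff.1 hle])
  · rintro C ⟨hC, hCA⟩ _ ⟨j, hj, hjn, rfl⟩ hne
    refine ⟨fun hle => hne (hE.eq_add_single_of_minGen_le hss hC hCA hj hjn hle), fun hle => ?_⟩
    exact hCA (hC.eq_of_le hE.2.1.1 ((lt_add_single A j).le.trans hle)).symm

lemma gens_expansionIdeal (hss : StronglyStable I) (hE : Expandable I A) :
    Gens (expansionIdeal I A) = (Gens I \ {A}) ∪ expSet A :=
  gens_span_of_isAntichain (hE.isAntichain_gens_sdiff_union_expSet hss)

lemma mon_mem_expansionIdeal_of_not_le {B : Fin (n+1) →₀ ℕ} (hB : (mon B : PR K n) ∈ I)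
    (hAB : ¬ A ≤ B) :
    (mon B : PR K n) ∈ expansionIdeal I A := by
  obtain ⟨G, hG, hGB⟩ := exists_minGen_le hB
  exact mon_mem_span_iff.2 ⟨G, Or.inl ⟨hG, by rintro rfl; exact hAB hGB⟩, hGB⟩

lemma Expandable.contractible_expansionIdeal (hss : StronglyStable I) (hsat : Saturated I)
    (hE : Expandable I A) : Contractible (expansionIdeal I A) A := by
  have hr : maxIdx A < Fin.last n := maxIdx_lt_last hE.1 (hE.2.1.apply_last_eq_zero hss hsat)
  refine ⟨hE.1, ?_, ?_, ?_⟩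
  · rw [expansionIdeal, mon_mem_span_iff]
    rintro ⟨C, ⟨hC, hCA⟩ | ⟨j, -, -, rfl⟩, hle⟩
    · exact hCA (hE.2.1.eq_of_le hC.1 hle)
    · exact (lt_add_single A j).not_ge hle
  · change _ ∈ Gens _
    rw [gens_expansionIdeal hss hE]
    have hlast : (((n - 1 : ℕ) : Fin (n+1)) : ℕ) = n - 1 := Fin.val_cast_of_lt (by omega)
    have hr' : (maxIdx A : ℕ) < n := hr
    exact Or.inr ⟨_, by omega, by omega, rfl⟩
  · rintro _ ⟨i, hi, -, hAi, rfl⟩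
    obtain ⟨D, rfl⟩ := exists_eq_add_single hAi
    rw [shiftM_add_single]
    have hi' : (((i : ℕ) - 1 : ℕ) : Fin (n+1)) < i :=
      Fin.lt_def.2 (by rw [Fin.val_cast_of_lt (by omega)]; omega)
    exact mon_mem_expansionIdeal_of_not_le (hss.add_single_mem hE.2.1.1 hi'.le)
      fun h => hi'.ne' (add_single_le_add_single_iff.1 h)

lemma contractionIdeal_expansionIdeal (hmono : IsMonomialIdeal I) (hss : StronglyStable I)
    (hE : Expandable I A) : contractionIdeal (expansionIdeal I A) A = I := by
  have hA : A ∈ Gens I := hE.2.1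
  have hdisj : ∀ C ∈ expSet A, C ∉ Gens I := by
    rintro _ ⟨j, -, -, rfl⟩ hC
    exact (lt_add_single A j).ne (hC.eq_of_le hE.2.1.1 (lt_add_single A j).le)
  have hset : ((Gens I \ {A}) ∪ expSet A ∪ {A}) \ expSet A = Gens I := by
    ext C
    have := hdisj C
    have : C = A → C ∈ Gens I := fun h => h ▸ hA
    simp only [Set.mem_sdiff, Set.mem_union, Set.mem_singleton_iff]
    tauto
  rw [contractionIdeal, gens_expansionIdeal hss hE, hset, span_gens hmono]

end Expansion

section Contraction

variable {K : Type*} [Field K] {n : ℕ} {I : Ideal (PR K n)} {A : Fin (n+1) →₀ ℕ}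

lemma Contractible.expSet_subset_gens (hss : StronglyStable I) (hC : Contractible I A) :
    expSet A ⊆ Gens I := by
  rintro _ ⟨j, hj, hjn, rfl⟩
  have hjt : j ≤ (((n - 1 : ℕ)) : Fin (n+1)) :=
    Fin.le_def.2 (by rw [Fin.val_cast_of_lt (by omega)]; omega)
  refine ⟨hss.add_single_mem hC.2.2.1.1 hjt, fun B hle hne hB => hC.2.1 ?_⟩
  rcases hss.le_or_exists_of_le_add_single hB hle hne hj with hBA | ⟨F, i, -, -, hFA, hF⟩
  · exact mon_mem_of_le hB hBA
  · exact mon_mem_of_le hF hFA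

lemma Contractible.mem_expSet_of_le (hss : StronglyStable I) (hsat : Saturated I)
    (hC : Contractible I A) {G : Fin (n+1) →₀ ℕ} (hG : MinGen I G) (hAG : A ≤ G) :
    G ∈ expSet A := by
  have hGlast := hG.apply_last_eq_zero hss hsat
  obtain ⟨k, hk⟩ :=
    exists_add_single_le_of_lt (lt_of_le_of_ne hAG (by rintro rfl; exact hC.2.1 hG.1))
  obtain ⟨r, hr⟩ : ∃ r, maxIdx A = r := ⟨_, rfl⟩
  have hrn : (r : ℕ) < n := hr ▸ maxIdx_lt_last hC.1 (by have := hAG (Fin.last n); omega)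
  rcases lt_or_ge k r with hkr | hrk
  · -- The left shift `x^A x_{r-1} / x_r` moves on to `x^A x_k / x_r`, a proper divisor of `x^G`.
    exfalso
    have hAr : A r ≠ 0 := hr ▸ apply_maxIdx_ne_zero hC.1
    have hleft := hC.2.2.2 _ ⟨r, by omega, by omega, hAr, rfl⟩
    obtain ⟨D, rfl⟩ := exists_eq_add_single hAr
    rw [shiftM_add_single] at hleft
    have hDk := hss.add_single_mem hleft (i := k)
      (Fin.le_def.2 (by rw [Fin.val_cast_of_lt (by omega)]; have := Fin.lt_def.1 hkr; omega))
    have hlt : D + Finsupp.single k 1 < G :=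
      lt_of_lt_of_le (by simpa [add_right_comm D] using lt_add_single (D + Finsupp.single k 1) r) hk
    exact hlt.ne (hG.eq_of_le hDk hlt.le)
  · have hkn : (k : ℕ) + 1 ≤ n := by
      have hkl : k ≠ Fin.last n := by
        rintro rfl
        simpa [hGlast] using hk (Fin.last n)
      have := Fin.val_lt_last hkl
      omega
    have hAk := (hC.expSet_subset_gens hss ⟨k, hr ▸ hrk, hkn, rfl⟩).1
    exact ⟨k, hr ▸ hrk, hkn, (hG.eq_of_le hAk hk).symm⟩

lemma gens_contractionIdeal (hss : StronglyStable I) (hsat : Saturated I)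
    (hC : Contractible I A) :
    Gens (contractionIdeal I A) = (Gens I ∪ {A}) \ expSet A := by
  refine gens_span_of_isAntichain (IsAntichain.subset (s := insert A (Gens I \ expSet A)) ?_ ?_)
  · refine (isAntichain_gens.subset Set.sdiff_subset).insert ?_ ?_
    · exact fun B hB _ hle => hC.2.1 (mon_mem_of_le hB.1.1 hle)
    · exact fun B hB _ hle => hB.2 (hC.mem_expSet_of_le hss hsat hB.1 hle)
  · rintro B ⟨hB | rfl, hBE⟩
    · exact Or.inr ⟨hB, hBE⟩
    · exact Or.inl rfl

lemma Contractible.expandable_contractionIdeal (hss : StronglyStable I) (hsat : Saturated I)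
    (hC : Contractible I A) : Expandable (contractionIdeal I A) A := by
  refine ⟨hC.1, ?_, ?_⟩
  · change _ ∈ Gens _
    rw [gens_contractionIdeal hss hsat hC]
    exact ⟨Or.inr rfl, by rintro ⟨j, -, -, h⟩; exact (lt_add_single A j).ne h⟩
  · rintro _ ⟨i, hin, hAi, rfl⟩ hB
    change _ ∈ Gens _ at hB
    rw [gens_contractionIdeal hss hsat hC] at hB
    obtain ⟨D, rfl⟩ := exists_eq_add_single hAi
    rw [shiftM_add_single] at hB
    have hi : i < (((i : ℕ) + 1 : ℕ) : Fin (n+1)) :=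
      Fin.lt_def.2 (by rw [Fin.val_cast_of_lt (by omega)]; omega)
    rcases hB.1 with hB | hB
    · exact hC.2.1 (hss.add_single_mem hB.1 hi.le)
    · exact hi.ne' (add_single_inj.1 hB)

lemma expansionIdeal_contractionIdeal (hmono : IsMonomialIdeal I) (hss : StronglyStable I)
    (hsat : Saturated I) (hC : Contractible I A) : expansionIdeal (contractionIdeal I A) A = I := by
  have hsub := hC.expSet_subset_gens hss
  have hA : A ∉ Gens I := fun h => hC.2.1 h.1
  have hset : (((Gens I ∪ {A}) \ expSet A) \ {A}) ∪ expSet A = Gens I := by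
    ext B
    have := @hsub B
    have : B = A → B ∉ Gens I := fun h => h ▸ hA
    simp only [Set.mem_sdiff, Set.mem_union, Set.mem_singleton_iff]
    tauto
  rw [expansionIdeal, gens_contractionIdeal hss hsat hC, hset, span_gens hmono]

end Contraction

theorem expansion_contraction_inverse_general
    {K : Type*} [Field K] {n : ℕ} (I : Ideal (PR K n))
    (hmono : IsMonomialIdeal I) (hss : StronglyStable I) (hsat : Saturated I)
    (A : Fin (n+1) →₀ ℕ) :
    (Expandable I A →
      Contractible (expansionIdeal I A) A ∧ contractionIdeal (expansionIdeal I A) A = I) ∧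
    (Contractible I A →
      Expandable (contractionIdeal I A) A ∧ expansionIdeal (contractionIdeal I A) A = I) :=
  ⟨fun hE => ⟨hE.contractible_expansionIdeal hss hsat,
      contractionIdeal_expansionIdeal hmono hss hE⟩,
    fun hC => ⟨hC.expandable_contractionIdeal hss hsat,
      expansionIdeal_contractionIdeal hmono hss hsat hC⟩⟩

/-- expansion and contraction are inverse operations on saturated
strongly stable ideals. -/
theorem expansion_contraction_inverse
    {K : Type*} [Field K] {n : ℕ} (hn : 2 ≤ n) (I : Ideal (PR K n))
    (hmono : IsMonomialIdeal I) (hss : StronglyStable I) (hsat : Saturated I)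
    (A : Fin (n+1) →₀ ℕ) :
    (Expandable I A →
      Contractible (expansionIdeal I A) A ∧ contractionIdeal (expansionIdeal I A) A = I) ∧
    (Contractible I A →
      Expandable (contractionIdeal I A) A ∧ expansionIdeal (contractionIdeal I A) A = I) :=
  expansion_contraction_inverse_general I hmono hss hsat A
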